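/- Let m, n ≥ 3 be integers. Then V_n divides U_m if and only if n divides m and m/n is even. -/
import Mathlib


/-- The first Lucas sequence with parameters `(a, b)`:
`U 0 = 0`, `U 1 = 1`, `U (k+2) = a * U (k+1) + b * U k`. -/
def U (a b : ℤ) : ℕ → ℤ
  | 0 => 0
  | 1 => 1
  | (k + 2) => a * U a b (k + 1) + b * U a b k

/-- The second Lucas sequence with parameters `(a, b)`:
`V 0 = 2`, `V 1 = a`, `V (k+2) = a * V (k+1) + b * V k`. -/
def V (a b : ℤ) : ℕ → ℤ
  | 0 => 2
  | 1 => a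
  | (k + 2) => a * V a b (k + 1) + b * V a b k

variable (a b : ℤ)

lemma U_rec (k : ℕ) : U a b (k+2) = a * U a b (k+1) + b * U a b k := by simp [U]
lemma V_rec (k : ℕ) : V a b (k+2) = a * V a b (k+1) + b * V a b k := by simp [V]

lemma U_add (p q : ℕ) :
    U a b (p + q + 1) = U a b (p+1) * U a b (q+1) + b * U a b p * U a b q := by
  induction p using Nat.twoStepInduction with
  | zero => simp [U]
  | one =>
    have e : 1 + q + 1 = q + 2 := by omega
    rw [e, U_rec]; simp [U]
  | more p ih1 ih2 =>
    have e1 : p + 2 + q + 1 = (p + q + 1) + 2 := by omega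
    have e2 : p + 1 + q + 1 = (p + q + 1) + 1 := by omega
    rw [e2] at ih2
    rw [e1, U_rec, ih2, ih1, U_rec a b (p+1), U_rec a b p]
    ring

lemma V_eq_U (n : ℕ) : V a b (n+1) = U a b (n+2) + b * U a b n := by
  induction n using Nat.twoStepInduction with
  | zero => simp [U, V]
  | one => simp [U, V]; ring
  | more n ih1 ih2 =>
    rw [V_rec, ih1, ih2, U_rec a b (n+2), U_rec a b (n+1), U_rec a b n]
    ring

lemma cassini (t : ℕ) :
    U a b (t+1) ^ 2 - U a b t * U a b (t+2) = (-b) ^ t := by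
  induction t with
  | zero => simp [U]
  | succ t ih =>
    rw [U_rec a b (t+1), pow_succ]
    linear_combination (-b) * ih + (U a b (t+2)) * (U_rec a b t)

lemma U_two_mul (t : ℕ) : U a b (2*t) = V a b t * U a b t := by
  cases t with
  | zero => simp [U]
  | succ k =>
    have e : 2*(k+1) = (k+1) + k + 1 := by omega
    rw [e, U_add, V_eq_U, U_rec]
    ring

lemma U_refl (t : ℕ) : ∀ s, U a b (s + 2*t) = V a b (s+t) * U a b t + (-b)^t * U a b s := by
  intro s
  induction s using Nat.twoStepInduction with
  | zero => simpa [U] using U_two_mul a b t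
  | one =>
    have e : 1 + 2*t = t + t + 1 := by omega
    have e2 : 1 + t = t + 1 := by omega
    rw [e, U_add, e2, V_eq_U]
    simp [U]
    linear_combination cassini a b t + U a b t * U_rec a b t
  | more s ih1 ih2 =>
    have e1 : s + 2 + 2*t = (s + 2*t) + 2 := by omega
    have e2 : s + 1 + 2*t = (s + 2*t) + 1 := by omega
    have e3 : s + 2 + t = (s + t) + 2 := by omega
    have e4 : s + 1 + t = (s + t) + 1 := by omega
    rw [e2, e4] at ih2
    rw [e1, U_rec, ih1, ih2, e3, V_rec, U_rec a b s]
    ring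

lemma isCoprime_b_U (hab : IsCoprime a b) (k : ℕ) : IsCoprime b (U a b (k+1)) := by
  induction k using Nat.twoStepInduction with
  | zero => simpa [U] using isCoprime_one_right
  | one => simpa [U] using hab.symm
  | more k ih1 ih2 =>
    rw [U_rec]
    exact (hab.symm.mul_right ih2).add_mul_left_right _
lemma isCoprime_b_V (hab : IsCoprime a b) (k : ℕ) : IsCoprime b (V a b (k+1)) := by
  induction k using Nat.twoStepInduction with
  | zero => simpa [V] using hab.symm
  | one =>
    have : V a b 2 = a * a + b * 2 := by simp [V]
    rw [this]
    exact ((hab.symm.mul_right hab.symm)).add_mul_left_right _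
  | more k ih1 ih2 =>
    rw [V_rec]
    exact (hab.symm.mul_right ih2).add_mul_left_right _

lemma isCoprime_U_succ (hab : IsCoprime a b) (k : ℕ) :
    IsCoprime (U a b k) (U a b (k+1)) := by
  induction k with
  | zero => simpa [U] using isCoprime_one_right
  | succ k ih =>
    rw [U_rec]
    exact ((isCoprime_b_U a b hab k).symm.mul_right ih.symm).mul_add_right_right a

lemma dvd_U_add {N : ℤ} (j p : ℕ) (hj : N ∣ U a b (j+1)) (hp : N ∣ U a b p) :
    N ∣ U a b (p + j + 1) := by
  rw [U_add]
  exact dvd_add (hj.mul_left _) (((hp.mul_left b).mul_right _))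

lemma dvd_U_mul (j q : ℕ) : V a b (j+1) ∣ U a b (2*(j+1)*q) := by
  induction q with
  | zero => simp [U]
  | succ q ih =>
    have e : 2*(j+1)*(q+1) = 2*(j+1)*q + (2*j+1) + 1 := by ring
    rw [e]
    refine dvd_U_add a b _ _ ?_ ih
    have e2 : 2*j+1+1 = 2*(j+1) := by omega
    rw [e2, U_two_mul]
    exact Dvd.intro _ rfl

lemma dvd_U_sub {N : ℤ} (hNb : IsCoprime N b) (hab : IsCoprime a b) (j p : ℕ)
    (hj : N ∣ U a b (j+1)) (h : N ∣ U a b (p + j + 1)) : N ∣ U a b p := by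
  rw [U_add] at h
  have h2 : N ∣ b * U a b p * U a b j := (dvd_add_right (hj.mul_left _)).mp h
  have hcj : IsCoprime N (U a b j) :=
    ((isCoprime_U_succ a b hab j).of_isCoprime_of_dvd_right hj).symm
  have hc : IsCoprime N (b * U a b j) := hNb.mul_right hcj
  have h3 : N ∣ b * U a b j * U a b p := by
    rwa [show b * U a b j * U a b p = b * U a b p * U a b j from by ring]
  exact hc.dvd_of_dvd_mul_left h3

lemma core_mp (hab : IsCoprime a b) (n : ℕ) (hn : 1 ≤ n)
    (hU : ∀ m, 0 < m → m < n → U a b m ≠ 0 ∧ |U a b m| < |V a b n|)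
    (hV3 : 2 < |V a b n|) :
    ∀ m, V a b n ∣ U a b m → 2*n ∣ m := by
  obtain ⟨j, rfl⟩ : ∃ j, n = j + 1 := ⟨n - 1, by omega⟩
  set N := V a b (j+1) with hN
  have hNb : IsCoprime N b := (isCoprime_b_V a b hab j).symm
  have h2n : N ∣ U a b (2*(j+1)) := by rw [U_two_mul]; exact Dvd.intro _ rfl
  intro m
  induction m using Nat.strong_induction_on with
  | _ m ih =>
    intro h
    rcases le_or_gt (2*(j+1)) m with hge | hlt
    · -- descent
      set p := m - 2*(j+1) with hp
      have e : m = p + (2*j+1) + 1 := by omega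
      rw [e] at h
      have hj2 : N ∣ U a b (2*j+1+1) := by
        have e2 : 2*j+1+1 = 2*(j+1) := by omega
        rw [e2]; exact h2n
      have hdp : N ∣ U a b p := dvd_U_sub a b hNb hab (2*j+1) p hj2 h
      have h8 := Nat.dvd_add (ih p (by omega) hdp) (dvd_refl (2*(j+1)))
      rwa [show p + 2*(j+1) = m from by omega] at h8
    · -- m < 2n : show m = 0
      rcases Nat.eq_zero_or_pos m with rfl | hm0
      · simp
      exfalso
      have small : ∀ s, 0 < s → s < j + 1 → ¬ N ∣ U a b s := by
        intro s hs1 hs2 hdvd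
        obtain ⟨hne, hlt'⟩ := hU s hs1 hs2
        have h1 : |N| ∣ |U a b s| := abs_dvd_abs _ _ |>.mpr hdvd |> id
        have h2 : |N| ≤ |U a b s| := Int.le_of_dvd (abs_pos.mpr hne) h1
        omega
      rcases lt_trichotomy m (j+1) with hmn | hmn | hmn
      · exact small m hm0 hmn h
      · -- m = n : N ∣ 2
        subst hmn
        have hVU : N = a * U a b (j+1) + 2*b*U a b j := by
          rw [hN, V_eq_U, U_rec]; ring
        have h1 : N ∣ 2*b*U a b j := by
          have : 2*b*U a b j = N - a * U a b (j+1) := by rw [hVU]; ring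
          rw [this]
          exact dvd_sub dvd_rfl (h.mul_left a)
        have h2 : N ∣ 2*U a b j := by
          refine hNb.dvd_of_dvd_mul_left ?_
          rwa [show b * (2*U a b j) = 2*b*U a b j from by ring]
        have h3 : N ∣ 2*U a b (j+1) := h.mul_left 2
        obtain ⟨u, v, huv⟩ := isCoprime_U_succ a b hab j
        have h4 : N ∣ 2 := by
          have e4 : (2:ℤ) = u*(2*U a b j) + v*(2*U a b (j+1)) := by linear_combination -2*huv
          rw [e4]
          exact dvd_add (h2.mul_left u) (h3.mul_left v)
        have h5 : |N| ≤ 2 := by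
          have := Int.le_of_dvd (by norm_num) ((abs_dvd_abs _ _ |>.mpr h4))
          simpa using this
        omega
      · -- n < m < 2n : reflection
        set s := 2*(j+1) - m with hs
        set t := m - (j+1) with ht
        have e : m = s + 2*t := by omega
        have est : s + t = j + 1 := by omega
        have hrefl := U_refl a b t s
        rw [est] at hrefl
        rw [e] at h
        rw [hrefl] at h
        have h6 : N ∣ (-b)^t * U a b s :=
          (dvd_add_right (Dvd.dvd.mul_right dvd_rfl _)).mp h
        have hcb : IsCoprime N ((-b)^t) := (hNb.neg_right).pow_right
        have h7 : N ∣ U a b s := hcb.dvd_of_dvd_mul_left h6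
        exact small s (by omega) (by omega) h7

lemma mono_step {f : ℕ → ℤ} (h : ∀ k, f (k+1) ≤ f (k+2)) :
    ∀ i j, i ≤ j → f (i+1) ≤ f (j+1) := by
  intro i j hij
  induction j, hij using Nat.le_induction with
  | base => exact le_refl _
  | succ j hij ih => exact le_trans ih (h j)

lemma growth (ha : 1 ≤ a) (hD : 0 < a^2 + 4*b) (hb : b ≠ 0) (n : ℕ) (hn : 3 ≤ n) :
    (2 < |V a b n| ∧ ∀ m, 0 < m → m < n → U a b m ≠ 0 ∧ |U a b m| < |V a b n|) := by
  have facts : (∀ k, 1 ≤ U a b (k+1)) ∧ (∀ k, U a b (k+1) ≤ U a b (k+2)) ∧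
      (2 ≤ U a b 3) ∧ (U a b n < V a b n) := by
    rcases lt_or_ge b 0 with hbneg | hbpos
    · -- b ≤ -1, derive a ≥ 3
      have hb1 : b ≤ -1 := by omega
      have ha3 : 3 ≤ a := by
        rcases lt_or_ge a 3 with h | h
        · interval_cases a <;> omega
        · exact h
      have IU : ∀ k, 0 ≤ U a b k ∧ a * U a b k ≤ 2 * U a b (k+1) := by
        intro k
        induction k with
        | zero => simp [U]
        | succ k ih =>
          obtain ⟨h0, h1⟩ := ih
          have hU1 : 0 ≤ U a b (k+1) := by nlinarith
          refine ⟨hU1, ?_⟩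
          rw [U_rec]
          nlinarith [mul_le_mul_of_nonpos_left h1 (show (2*b:ℤ) ≤ 0 by omega),
            mul_nonneg hU1 hD.le]
      have P1 : ∀ k, 1 ≤ U a b (k+1) := by
        intro k
        induction k with
        | zero => simp [U]
        | succ k ih => nlinarith [(IU (k+1)).2]
      have P2 : ∀ k, U a b (k+1) ≤ U a b (k+2) := by
        intro k
        nlinarith [(IU (k+1)).2, P1 k, P1 (k+1)]
      have IW : ∀ k, 0 < V a b k - U a b k ∧
          (a-1) * (V a b k - U a b k) ≤ 2 * (V a b (k+1) - U a b (k+1)) := by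
        intro k
        induction k with
        | zero => simp [U, V]; omega
        | succ k ih =>
          obtain ⟨h0, h1⟩ := ih
          have hW1 : 0 < V a b (k+1) - U a b (k+1) := by nlinarith
          refine ⟨hW1, ?_⟩
          rw [U_rec, V_rec]
          nlinarith [mul_le_mul_of_nonpos_left h1 (show (2*b:ℤ) ≤ 0 by omega),
            mul_pos (show (0:ℤ) < a - 1 by omega) hW1]
      have P3 : 2 ≤ U a b 3 := by
        have : U a b 3 = a*a + b := by first | (simp [U]; ring) | simp [U]
        rw [this]; nlinarith
      exact ⟨P1, P2, P3, by linarith [(IW n).1]⟩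
    · -- b ≥ 1
      have hb1 : 1 ≤ b := by omega
      have P1 : ∀ k, 1 ≤ U a b (k+1) := by
        intro k
        induction k using Nat.twoStepInduction with
        | zero => simp [U]
        | one => simpa [U] using ha
        | more k ih1 ih2 =>
          rw [U_rec]
          nlinarith
      have P2 : ∀ k, U a b (k+1) ≤ U a b (k+2) := by
        intro k
        cases k with
        | zero => simpa [U] using ha
        | succ k => rw [U_rec a b (k+1)]; nlinarith [P1 k, P1 (k+1)]
      have P3 : 2 ≤ U a b 3 := by
        have : U a b 3 = a*a + b := by first | (simp [U]; ring) | simp [U]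
        rw [this]; nlinarith
      have key : U a b n < V a b n := by
        obtain ⟨j, rfl⟩ : ∃ j, n = j + 2 := ⟨n - 2, by omega⟩
        rw [V_eq_U]
        have h1 : U a b (j+2) ≤ U a b (j+3) := P2 (j+1)
        nlinarith [P1 j]
      exact ⟨P1, P2, P3, key⟩
  obtain ⟨P1, P2, P3, key⟩ := facts
  have mono : ∀ i j, i ≤ j → U a b (i+1) ≤ U a b (j+1) := mono_step P2
  have hUn : 2 ≤ U a b n := by
    have := mono 2 (n-1) (by omega)
    have e : n - 1 + 1 = n := by omega
    rw [e] at this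
    linarith [P3]
  have hV : 2 < V a b n := by linarith
  have hVabs : |V a b n| = V a b n := abs_of_pos (by linarith)
  refine ⟨by omega, ?_⟩
  intro m hm0 hmn
  obtain ⟨i, rfl⟩ : ∃ i, m = i + 1 := ⟨m - 1, by omega⟩
  have h1 : 1 ≤ U a b (i+1) := P1 i
  have h2 : U a b (i+1) ≤ U a b n := by
    have := mono i (n-1) (by omega)
    rwa [show n - 1 + 1 = n from by omega] at this
  refine ⟨by omega, ?_⟩
  rw [hVabs, abs_of_pos (by omega)]
  omega

lemma main_pos (hab : IsCoprime a b) (ha : 1 ≤ a) (hD : 0 < a^2 + 4*b) (hb : b ≠ 0)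
    (m n : ℕ) (hn : 3 ≤ n) : V a b n ∣ U a b m ↔ 2*n ∣ m := by
  obtain ⟨hV3, hU⟩ := growth a b ha hD hb n hn
  constructor
  · exact core_mp a b hab n (by omega) hU hV3 m
  · rintro ⟨q, rfl⟩
    obtain ⟨j, rfl⟩ : ∃ j, n = j + 1 := ⟨n - 1, by omega⟩
    exact dvd_U_mul a b j q

lemma U_neg (k : ℕ) : U (-a) b k = (-1)^(k+1) * U a b k := by
  induction k using Nat.twoStepInduction with
  | zero => simp [U]
  | one => simp [U]
  | more k ih1 ih2 =>
    rw [U_rec, ih1, ih2, U_rec a b k]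
    simp only [pow_succ]
    ring

lemma V_neg (k : ℕ) : V (-a) b k = (-1)^k * V a b k := by
  induction k using Nat.twoStepInduction with
  | zero => simp [V]
  | one => simp [V]
  | more k ih1 ih2 =>
    rw [V_rec, ih1, ih2, V_rec a b k]
    simp only [pow_succ]
    ring

lemma dvd_iff_neg (n m : ℕ) : V (-a) b n ∣ U (-a) b m ↔ V a b n ∣ U a b m := by
  rw [U_neg, V_neg]
  rcases Nat.even_or_odd n with hn | hn <;> rcases Nat.even_or_odd (m+1) with hm | hm <;>
    simp [hn.neg_one_pow, hm.neg_one_pow, neg_dvd, dvd_neg]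


/-- The order of appearance of `m` in the first Lucas sequence with parameters `(a, b)`:
the smallest positive integer `k` such that `m ∣ U a b k`. -/
noncomputable def tau (a b : ℤ) (m : ℤ) : ℕ :=
  sInf {k : ℕ | 0 < k ∧ m ∣ U a b k}

/-- The pair `(a, b)` is nondegenerate: `b ≠ 0` and
`(a, b) ∉ {(±2, -1), (±1, -1), (0, ±1), (±1, 0)}`. -/
def Nondegenerate (a b : ℤ) : Prop :=
  b ≠ 0 ∧ (a, b) ∉ ({(2, -1), (-2, -1), (1, -1), (-1, -1),
    (0, 1), (0, -1), (1, 0), (-1, 0)} : Set (ℤ × ℤ))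

theorem V_dvd_U_iff (a b : ℤ) (hab : IsCoprime a b)
    (hΔ : 0 < a ^ 2 + 4 * b) (hnd : Nondegenerate a b)
    (m n : ℕ) (hm : 3 ≤ m) (hn : 3 ≤ n) :
    V a b n ∣ U a b m ↔ n ∣ m ∧ Even (m / n) := by
  have hb : b ≠ 0 := hnd.1
  have hrhs : (n ∣ m ∧ Even (m / n)) ↔ 2*n ∣ m := by
    constructor
    · rintro ⟨hd, he⟩
      rw [even_iff_two_dvd] at he
      have := (Nat.dvd_div_iff_mul_dvd hd).mp he
      rwa [mul_comm] at this
    · rintro ⟨q, rfl⟩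
      refine ⟨⟨2*q, by ring⟩, ?_⟩
      rw [show 2*n*q = n*(2*q) from by ring, Nat.mul_div_cancel_left _ (by omega : 0 < n)]
      exact even_two_mul q
  rw [hrhs]
  have ha0 : a ≠ 0 := by
    rintro rfl
    have hu : b = 1 ∨ b = -1 := Int.isUnit_iff.mp (isCoprime_zero_left.mp hab)
    have h2 := hnd.2
    simp only [Set.mem_insert_iff, Set.mem_singleton_iff, Prod.mk.injEq] at h2
    rcases hu with rfl | rfl <;> simp at h2
  rcases lt_or_ge 0 a with hapos | haneg
  · exact main_pos a b hab hapos hΔ hb m n hn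
  · have ha1 : 1 ≤ -a := by omega
    have hab' : IsCoprime (-a) b := hab.neg_left
    have hD' : 0 < (-a)^2 + 4*b := by nlinarith
    have := dvd_iff_neg (-a) b n m
    rw [neg_neg] at this
    rw [this]
    exact main_pos (-a) b hab' ha1 hD' hb m n hn
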